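/- arXiv:math/0609155 — 8 statements merged into one kernel-verified Lean document; each statement's English description precedes it below -/
import Mathlib

section
/- If all t₁,…,tₙ are real and the Hankel matrix F = (s_{i+j-1})_{i,j=1}^n is positive semidefinite, where s_k = t₁^k + ⋯ + tₙ^k, then all tᵢ are nonnegative. -/
open Polynomial Finset Matrix

theorem nonneg_of_hankel_F_posSemidef (n : ℕ) (t : Fin n → ℝ)
    (hF : (Matrix.of fun i j : Fin n => ∑ l, t l ^ ((i : ℕ) + (j : ℕ) + 1)).PosSemidef) :
    ∀ i, 0 ≤ t i := by
  by_contra h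
  push_neg at h
  obtain ⟨m, hm⟩ := h
  set S : Finset ℝ := (Finset.univ.image t).erase (t m) with hS
  set p : ℝ[X] := ∏ v ∈ S, (X - C v) with hp
  have hmem : t m ∈ Finset.univ.image t := Finset.mem_image_of_mem t (Finset.mem_univ m)
  have hdeg : p.natDegree < n := by
    have h1 : p.natDegree = S.card := by
      rw [hp, Polynomial.natDegree_prod _ _ (fun v _ => X_sub_C_ne_zero v)]
      simp [Polynomial.natDegree_X_sub_C]
    have h2 : S.card < (Finset.univ.image t).card :=
      Finset.card_erase_lt_of_mem hmem
    have h3 : (Finset.univ.image t).card ≤ n := by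
      simpa using Finset.card_image_le (s := (Finset.univ : Finset (Fin n))) (f := t)
    omega
  set x : Fin n → ℝ := fun i => p.coeff i with hx
  have heval : ∀ c : ℝ, ∑ i : Fin n, x i * c ^ (i : ℕ) = p.eval c := by
    intro c
    rw [Polynomial.eval_eq_sum_range' hdeg]
    exact Fin.sum_univ_eq_sum_range (fun i => p.coeff i * c ^ i) n
  have key : x ⬝ᵥ ((Matrix.of fun i j : Fin n => ∑ l, t l ^ ((i : ℕ) + (j : ℕ) + 1)) *ᵥ x)
      = ∑ l, t l * (p.eval (t l)) ^ 2 := by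
    have inner : ∀ l : Fin n,
        (∑ i : Fin n, ∑ j : Fin n, x i * (t l ^ ((i : ℕ) + (j : ℕ) + 1) * x j))
        = t l * (p.eval (t l)) ^ 2 := by
      intro l
      calc ∑ i : Fin n, ∑ j : Fin n, x i * (t l ^ ((i : ℕ) + (j : ℕ) + 1) * x j)
          = ∑ i : Fin n, (x i * t l ^ (i : ℕ)) * (t l * ∑ j : Fin n, x j * t l ^ (j : ℕ)) := by
            refine Finset.sum_congr rfl fun i _ => ?_
            rw [Finset.mul_sum, Finset.mul_sum]
            refine Finset.sum_congr rfl fun j _ => ?_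
            rw [pow_add, pow_add]
            ring
        _ = (∑ i : Fin n, x i * t l ^ (i : ℕ)) * (t l * ∑ j : Fin n, x j * t l ^ (j : ℕ)) := by
            rw [← Finset.sum_mul]
        _ = t l * (p.eval (t l)) ^ 2 := by rw [heval]; ring
    calc x ⬝ᵥ ((Matrix.of fun i j : Fin n => ∑ l, t l ^ ((i : ℕ) + (j : ℕ) + 1)) *ᵥ x)
        = ∑ i : Fin n, ∑ j : Fin n, ∑ l : Fin n,
            x i * (t l ^ ((i : ℕ) + (j : ℕ) + 1) * x j) := by
          simp only [dotProduct, Matrix.mulVec, Matrix.of_apply]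
          refine Finset.sum_congr rfl fun i _ => ?_
          rw [Finset.mul_sum]
          refine Finset.sum_congr rfl fun j _ => ?_
          rw [Finset.sum_mul, Finset.mul_sum]
      _ = ∑ i : Fin n, ∑ l : Fin n, ∑ j : Fin n,
            x i * (t l ^ ((i : ℕ) + (j : ℕ) + 1) * x j) :=
          Finset.sum_congr rfl fun i _ => Finset.sum_comm
      _ = ∑ l : Fin n, ∑ i : Fin n, ∑ j : Fin n,
            x i * (t l ^ ((i : ℕ) + (j : ℕ) + 1) * x j) := Finset.sum_comm
      _ = ∑ l, t l * (p.eval (t l)) ^ 2 := Finset.sum_congr rfl fun l _ => inner l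
  have hpos := hF.dotProduct_mulVec_nonneg x
  rw [show (star x : Fin n → ℝ) = x from rfl] at hpos
  rw [key] at hpos
  have hneg : ∑ l, t l * (p.eval (t l)) ^ 2 < 0 := by
    have hterm : ∀ l : Fin n, l ∈ Finset.univ → t l * (p.eval (t l)) ^ 2 ≤ 0 := by
      intro l _
      by_cases hl : t l = t m
      · have hne : p.eval (t l) ≠ 0 → t l < 0 := fun _ => hl ▸ hm
        rcases eq_or_ne (p.eval (t l)) 0 with h0 | h0
        · simp [h0]
        · nlinarith [sq_nonneg (p.eval (t l)), sq_pos_of_ne_zero h0, hne h0]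
      · have : t l ∈ S := Finset.mem_erase.mpr ⟨hl, Finset.mem_image_of_mem t (Finset.mem_univ l)⟩
        have : p.eval (t l) = 0 := by
          rw [hp, Polynomial.eval_prod]
          exact Finset.prod_eq_zero this (by simp)
        simp [this]
    have hmne : p.eval (t m) ≠ 0 := by
      rw [hp, Polynomial.eval_prod]
      rw [Finset.prod_ne_zero_iff]
      intro v hv
      have : v ≠ t m := Finset.ne_of_mem_erase hv
      simp [sub_eq_zero]
      exact fun h => this h.symm
    have hsq : 0 < (p.eval (t m)) ^ 2 := by positivity
    have hstrict : t m * (p.eval (t m)) ^ 2 < 0 := mul_neg_of_neg_of_pos hm hsq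
    have := Finset.sum_lt_sum hterm ⟨m, Finset.mem_univ m, hstrict⟩
    simpa using this
  linarith
end

section
/- Let t₁,…,tₙ be real numbers lying in [a,b] and s_k = t₁^k + ⋯ + tₙ^k. Then for every natural number m, the m×m matrix F⁺(a) with entries s_{i+j-1} − a·s_{i+j-2} is positive semidefinite. -/
theorem hankel_Fplus_posSemidef (n : ℕ) (a b : ℝ) (hab : a ≤ b) (t : Fin n → ℝ)
    (ht : ∀ i, t i ∈ Set.Icc a b) (m : ℕ) :
    (Matrix.of fun i j : Fin m =>
      (∑ l, t l ^ ((i : ℕ) + (j : ℕ) + 1)) - a * ∑ l, t l ^ ((i : ℕ) + (j : ℕ))).PosSemidef := by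
  have hentry : ∀ i j : Fin m,
      (∑ l, t l ^ ((i : ℕ) + (j : ℕ) + 1)) - a * ∑ l, t l ^ ((i : ℕ) + (j : ℕ))
        = ∑ l, (t l - a) * (t l ^ (i : ℕ) * t l ^ (j : ℕ)) := by
    intro i j
    rw [Finset.mul_sum, ← Finset.sum_sub_distrib]
    refine Finset.sum_congr rfl fun l _ => ?_
    rw [← pow_add]
    ring
  rw [Matrix.posSemidef_iff_dotProduct_mulVec]
  constructor
  · ext i j
    simp only [Matrix.conjTranspose_apply, Matrix.of_apply, star_trivial]
    rw [Nat.add_comm (j : ℕ) (i : ℕ)]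
  · intro x
    have hq : dotProduct (star x) ((Matrix.of fun i j : Fin m =>
        (∑ l, t l ^ ((i : ℕ) + (j : ℕ) + 1)) - a * ∑ l, t l ^ ((i : ℕ) + (j : ℕ))).mulVec x)
        = ∑ l, (t l - a) * (∑ i, x i * t l ^ (i : ℕ)) ^ 2 := by
      simp only [dotProduct, Matrix.mulVec, Matrix.of_apply, star_trivial, hentry]
      have h3 : ∀ (F : Fin m → Fin m → Fin n → ℝ),
          ∑ i, ∑ j, ∑ l, F i j l = ∑ l, ∑ j, ∑ i, F i j l := fun F =>
        calc ∑ i, ∑ j, ∑ l, F i j l = ∑ j, ∑ i, ∑ l, F i j l := Finset.sum_comm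
          _ = ∑ j, ∑ l, ∑ i, F i j l := Finset.sum_congr rfl fun j _ => Finset.sum_comm
          _ = ∑ l, ∑ j, ∑ i, F i j l := Finset.sum_comm
      simp only [Finset.mul_sum, Finset.sum_mul, sq]
      rw [h3]
      refine Finset.sum_congr rfl fun l _ => Finset.sum_congr rfl fun j _ =>
        Finset.sum_congr rfl fun i _ => by ring
    rw [hq]
    exact Finset.sum_nonneg fun l _ => mul_nonneg (sub_nonneg.2 (ht l).1) (sq_nonneg _)
end

section
/- Let t₁,…,tₙ be real numbers lying in [a,b] and s_k = t₁^k + ⋯ + tₙ^k. Then for every natural number m, the m×m matrix F⁻(b) with entries b·s_{i+j-2} − s_{i+j-1} is positive semidefinite. -/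
theorem hankel_Fminus_posSemidef (n : ℕ) (a b : ℝ) (hab : a ≤ b) (t : Fin n → ℝ)
    (ht : ∀ i, t i ∈ Set.Icc a b) (m : ℕ) :
    (Matrix.of fun i j : Fin m =>
      b * (∑ l, t l ^ ((i : ℕ) + (j : ℕ))) - ∑ l, t l ^ ((i : ℕ) + (j : ℕ) + 1)).PosSemidef := by
  have key : ∀ i j : Fin m,
      b * (∑ l, t l ^ ((i : ℕ) + (j : ℕ))) - ∑ l, t l ^ ((i : ℕ) + (j : ℕ) + 1)
        = ∑ l, (b - t l) * (t l ^ (i : ℕ) * t l ^ (j : ℕ)) := by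
    intro i j
    rw [Finset.mul_sum, ← Finset.sum_sub_distrib]
    refine Finset.sum_congr rfl fun l _ => ?_
    rw [pow_add, pow_succ, pow_add]
    ring
  rw [Matrix.posSemidef_iff_dotProduct_mulVec]
  constructor
  · ext i j
    simp only [Matrix.conjTranspose_apply, Matrix.of_apply, RCLike.star_def, starRingEnd_apply,
      star_trivial]
    rw [add_comm (j : ℕ) (i : ℕ)]
  · intro x
    have calc1 : dotProduct (star x) (Matrix.mulVec (Matrix.of fun i j : Fin m =>
        b * (∑ l, t l ^ ((i : ℕ) + (j : ℕ))) - ∑ l, t l ^ ((i : ℕ) + (j : ℕ) + 1)) x)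
        = ∑ l, (b - t l) * (∑ i, x i * t l ^ (i : ℕ)) ^ 2 := by
      simp only [dotProduct, Matrix.mulVec, Matrix.of_apply, star_trivial, key]
      simp only [Finset.sum_mul, Finset.mul_sum, sq]
      rw [Finset.sum_comm]
      conv_rhs => rw [Finset.sum_comm]
      refine Finset.sum_congr rfl fun y _ => ?_
      rw [Finset.sum_comm]
      exact Finset.sum_congr rfl fun j _ => Finset.sum_congr rfl fun l _ => by ring
    rw [calc1]
    exact Finset.sum_nonneg fun l _ => mul_nonneg (sub_nonneg.2 (ht l).2) (sq_nonneg _)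
end

section
/- Let t₁,…,tₙ be real numbers in [a,b], s_k = t₁^k + ⋯ + tₙ^k, and m a natural number. Then the block-diagonal matrix H_m(a,b) = diag(R_m, F_m⁺(a), F_m⁻(b)) is positive semidefinite, where R_m = (s_{i+j-2}), F_m⁺(a) = (s_{i+j-1} − a·s_{i+j-2}), F_m⁻(b) = (b·s_{i+j-2} − s_{i+j-1}) are m×m matrices. -/
open Matrix

/-- Block-diagonal matrix `H_m(a,b) = diag(R_m, F_m⁺(a), F_m⁻(b))` built from the
sequence `s` of power sums. -/
noncomputable def Hmat (m : ℕ) (a b : ℝ) (s : ℕ → ℝ) :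
    Matrix (Fin m ⊕ (Fin m ⊕ Fin m)) (Fin m ⊕ (Fin m ⊕ Fin m)) ℝ :=
  Matrix.fromBlocks
    (Matrix.of fun i j : Fin m => s ((i : ℕ) + (j : ℕ))) 0 0
    (Matrix.fromBlocks
      (Matrix.of fun i j : Fin m => s ((i : ℕ) + (j : ℕ) + 1) - a * s ((i : ℕ) + (j : ℕ))) 0 0
      (Matrix.of fun i j : Fin m => b * s ((i : ℕ) + (j : ℕ)) - s ((i : ℕ) + (j : ℕ) + 1)))

/-- A diagonal block matrix is PSD if both blocks are. -/
lemma fromBlocks_psd {p q : Type*} [Fintype p] [Fintype q]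
    {A : Matrix p p ℝ} {D : Matrix q q ℝ}
    (hA : A.PosSemidef) (hD : D.PosSemidef) :
    (Matrix.fromBlocks A 0 0 D).PosSemidef := by
  refine Matrix.PosSemidef.of_dotProduct_mulVec_nonneg ?_ ?_
  · rw [Matrix.IsHermitian, Matrix.fromBlocks_conjTranspose, hA.1.eq, hD.1.eq]
    simp
  · intro x
    have hx : star x ⬝ᵥ (Matrix.fromBlocks A 0 0 D) *ᵥ x
        = star (x ∘ Sum.inl) ⬝ᵥ A *ᵥ (x ∘ Sum.inl)
          + star (x ∘ Sum.inr) ⬝ᵥ D *ᵥ (x ∘ Sum.inr) := by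
      simp [dotProduct, Fintype.sum_sum_type, Matrix.mulVec,
        Matrix.fromBlocks, Finset.mul_sum]
    rw [hx]
    exact add_nonneg (hA.dotProduct_mulVec_nonneg _) (hD.dotProduct_mulVec_nonneg _)

/-- A weighted moment (Hankel) matrix with nonnegative weights is PSD. -/
lemma hankel_psd {n m : ℕ} (t : Fin n → ℝ) (w : Fin n → ℝ) (hw : ∀ l, 0 ≤ w l) :
    (Matrix.of fun i j : Fin m => ∑ l, w l * t l ^ ((i : ℕ) + (j : ℕ))).PosSemidef := by
  refine Matrix.PosSemidef.of_dotProduct_mulVec_nonneg ?_ ?_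
  · ext i j
    simp [Matrix.conjTranspose_apply, Nat.add_comm (j : ℕ) (i : ℕ)]
  · intro x
    have key : ∀ l : Fin n, w l * (∑ i, x i * t l ^ (i : ℕ)) ^ 2
        = ∑ i : Fin m, ∑ j : Fin m, x i * (w l * t l ^ ((i : ℕ) + (j : ℕ)) * x j) := by
      intro l
      rw [sq, Finset.sum_mul_sum, Finset.mul_sum]
      refine Finset.sum_congr rfl fun i _ => ?_
      rw [Finset.mul_sum]
      refine Finset.sum_congr rfl fun j _ => ?_
      rw [pow_add]; ring
    have : star x ⬝ᵥ (Matrix.of fun i j : Fin m => ∑ l, w l * t l ^ ((i : ℕ) + (j : ℕ))) *ᵥ x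
        = ∑ l, w l * (∑ i, x i * t l ^ (i : ℕ)) ^ 2 := by
      simp only [key, dotProduct, Matrix.mulVec, Matrix.of_apply, Pi.star_apply,
        star_trivial, id_eq, Finset.sum_mul, Finset.mul_sum]
      conv_lhs => enter [2, y]; rw [Finset.sum_comm]
      rw [Finset.sum_comm]
    rw [this]
    exact Finset.sum_nonneg fun l _ => mul_nonneg (hw l) (sq_nonneg _)

theorem Hmat_posSemidef (n : ℕ) (a b : ℝ) (hab : a ≤ b) (t : Fin n → ℝ)
    (ht : ∀ i, t i ∈ Set.Icc a b) (m : ℕ) :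
    (Hmat m a b (fun k => ∑ l, t l ^ k)).PosSemidef := by
  have h1 : (Matrix.of fun i j : Fin m => (fun k => ∑ l, t l ^ k) ((i : ℕ) + (j : ℕ)))
      = Matrix.of fun i j : Fin m => ∑ l, (1 : ℝ) * t l ^ ((i : ℕ) + (j : ℕ)) := by
    ext i j; simp
  have h2 : (Matrix.of fun i j : Fin m =>
        (fun k => ∑ l, t l ^ k) ((i : ℕ) + (j : ℕ) + 1)
          - a * (fun k => ∑ l, t l ^ k) ((i : ℕ) + (j : ℕ)))
      = Matrix.of fun i j : Fin m => ∑ l, (t l - a) * t l ^ ((i : ℕ) + (j : ℕ)) := by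
    ext i j
    simp only [Matrix.of_apply, Finset.mul_sum, ← Finset.sum_sub_distrib]
    refine Finset.sum_congr rfl fun l _ => ?_
    rw [pow_succ]; ring
  have h3 : (Matrix.of fun i j : Fin m =>
        b * (fun k => ∑ l, t l ^ k) ((i : ℕ) + (j : ℕ))
          - (fun k => ∑ l, t l ^ k) ((i : ℕ) + (j : ℕ) + 1))
      = Matrix.of fun i j : Fin m => ∑ l, (b - t l) * t l ^ ((i : ℕ) + (j : ℕ)) := by
    ext i j
    simp only [Matrix.of_apply, Finset.mul_sum, ← Finset.sum_sub_distrib]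
    refine Finset.sum_congr rfl fun l _ => ?_
    rw [pow_succ]; ring
  unfold Hmat
  rw [h1, h2, h3]
  exact fromBlocks_psd (hankel_psd t 1 fun l => zero_le_one)
    (fromBlocks_psd (hankel_psd t _ fun l => sub_nonneg.2 (ht l).1)
      (hankel_psd t _ fun l => sub_nonneg.2 (ht l).2))
end

section
/- Let f(t) = Σ_{k=0}^N f_k Φ_k(t) with f_k ≥ 0 for all k and f₀ > 0, where each Φ_k is a positive-semidefinite zonal kernel on a metric space M (i.e., (Φ_k(τ(xᵢ,xⱼ)))_{i,j} ⪰ 0 for any finite point set) normalized by Φ_k(τ₀) = 1 with τ₀ = τ(x,x). If f(t) ≤ 0 for all t ∈ S, then every finite set C ⊆ M with τ(x,y) ∈ S for all distinct x,y ∈ C satisfies |C| ≤ f(τ₀)/f₀. -/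
theorem lp_bound {M : Type*} (τ : M → M → ℝ) (τ₀ : ℝ)
    (hτsymm : ∀ x y, τ x y = τ y x) (hτdiag : ∀ x, τ x x = τ₀)
    (N : ℕ) (Φ : Fin (N + 1) → ℝ → ℝ)
    (hΦ0 : ∀ t, Φ 0 t = 1) (hΦnorm : ∀ k, Φ k τ₀ = 1)
    (hΦpsd : ∀ (k : Fin (N + 1)) (n : ℕ) (x : Fin n → M),
      (Matrix.of fun i j : Fin n => Φ k (τ (x i) (x j))).PosSemidef)
    (f : Fin (N + 1) → ℝ) (hf : ∀ k, 0 ≤ f k) (hf0 : 0 < f 0)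
    (S : Set ℝ) (hτ₀S : τ₀ ∉ S)
    (hfS : ∀ t ∈ S, ∑ k, f k * Φ k t ≤ 0)
    (C : Finset M) (hC : ∀ x ∈ C, ∀ y ∈ C, x ≠ y → τ x y ∈ S) :
    (C.card : ℝ) ≤ (∑ k, f k * Φ k τ₀) / f 0 := by
  have hFnn : 0 ≤ ∑ k, f k * Φ k τ₀ := by
    apply Finset.sum_nonneg
    intro k _
    rw [hΦnorm k]
    simpa using hf k
  rcases Nat.eq_zero_or_pos C.card with h0 | hpos
  · rw [h0]
    push_cast
    exact div_nonneg hFnn hf0.le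
  set n := C.card with hn
  set x : Fin n → M := fun i => ((C.equivFin.symm i : C) : M) with hxdef
  have hxmem : ∀ i, x i ∈ C := fun i => (C.equivFin.symm i).2
  have hxinj : Function.Injective x := by
    intro i j hij
    exact C.equivFin.symm.injective (Subtype.ext hij)
  -- PSD gives nonnegativity of double sums
  have key : ∀ k, 0 ≤ ∑ i, ∑ j, Φ k (τ (x i) (x j)) := by
    intro k
    have h := (hΦpsd k n x).dotProduct_mulVec_nonneg (fun _ => 1)
    simpa [dotProduct, Matrix.mulVec, Finset.mul_sum] using h
  have h1 : f 0 * (n : ℝ)^2 ≤ ∑ i, ∑ j, ∑ k, f k * Φ k (τ (x i) (x j)) := by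
    have : ∑ i, ∑ j, ∑ k, f k * Φ k (τ (x i) (x j))
        = ∑ k, f k * ∑ i, ∑ j, Φ k (τ (x i) (x j)) := by
      calc ∑ i, ∑ j, ∑ k, f k * Φ k (τ (x i) (x j))
          = ∑ i, ∑ k, ∑ j, f k * Φ k (τ (x i) (x j)) :=
            Finset.sum_congr rfl (fun i _ => Finset.sum_comm)
        _ = ∑ k, ∑ i, ∑ j, f k * Φ k (τ (x i) (x j)) := Finset.sum_comm
        _ = ∑ k, f k * ∑ i, ∑ j, Φ k (τ (x i) (x j)) := by
            simp [Finset.mul_sum]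
    rw [this]
    have h00 : f 0 * ∑ i, ∑ j, Φ 0 (τ (x i) (x j)) = f 0 * (n : ℝ)^2 := by
      simp [hΦ0, sq]
    calc f 0 * (n : ℝ)^2 = f 0 * ∑ i, ∑ j, Φ 0 (τ (x i) (x j)) := h00.symm
      _ ≤ ∑ k, f k * ∑ i, ∑ j, Φ k (τ (x i) (x j)) := by
          apply Finset.single_le_sum (f := fun k => f k * ∑ i, ∑ j, Φ k (τ (x i) (x j)))
          · intro k _
            exact mul_nonneg (hf k) (key k)
          · exact Finset.mem_univ 0
  have h2 : ∑ i, ∑ j, ∑ k, f k * Φ k (τ (x i) (x j)) ≤ (n : ℝ) * ∑ k, f k * Φ k τ₀ := by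
    have hinner : ∀ i : Fin n, ∑ j, ∑ k, f k * Φ k (τ (x i) (x j)) ≤ ∑ k, f k * Φ k τ₀ := by
      intro i
      have hsplit := Finset.add_sum_erase Finset.univ
        (fun j => ∑ k, f k * Φ k (τ (x i) (x j))) (Finset.mem_univ i)
      rw [← hsplit]
      simp only [hτdiag]
      have hrest : ∑ j ∈ Finset.univ.erase i, ∑ k, f k * Φ k (τ (x i) (x j)) ≤ 0 := by
        apply Finset.sum_nonpos
        intro j hj
        have hne : x i ≠ x j := fun h => (Finset.ne_of_mem_erase hj) (hxinj h).symm
        exact hfS _ (hC _ (hxmem i) _ (hxmem j) hne)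
      linarith
    calc ∑ i, ∑ j, ∑ k, f k * Φ k (τ (x i) (x j))
        ≤ ∑ _i : Fin n, ∑ k, f k * Φ k τ₀ := Finset.sum_le_sum (fun i _ => hinner i)
      _ = (n : ℝ) * ∑ k, f k * Φ k τ₀ := by simp
  have hnpos : (0 : ℝ) < n := by exact_mod_cast hpos
  rw [le_div_iff₀ hf0]
  have : f 0 * (n : ℝ)^2 ≤ (n : ℝ) * ∑ k, f k * Φ k τ₀ := le_trans h1 h2
  nlinarith
end

section
/- Suppose t₁, t₂, t₃, t₄ are real numbers with −1 ≤ t₁ ≤ t₂ ≤ t₃ ≤ t₄ ≤ 1/2 and α₁, α₂, α₃, α₄ are nonnegative reals satisfying α₁t₁^k + α₂t₂^k + α₃t₃^k + α₄t₄^k = β_k for k = 0,…,7, where β₀ = 239, β₁ = β₃ = β₅ = β₇ = −1, β₂ = 29, β₄ = 8, β₆ = 11/4. Then (t₁,t₂,t₃,t₄) = (−1, −1/2, 0, 1/2) and (α₁,α₂,α₃,α₄) = (1, 56, 126, 56). -/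
/-!
The polynomial `f(x) = (x + 1)(1/2 - x) x² (x + 1/2)²` is nonnegative on `[-1, 1/2]`, and the
moment equations give `∑ αᵢ f(tᵢ) = 0`; so every node carrying weight is one of `-1, -1/2, 0, 1/2`.
For each of these four points `z`, the cubic vanishing at the other three has a nonzero moment sum,
so `z` must be a node. Being sorted, the `tᵢ` are then `-1, -1/2, 0, 1/2`, and the moment equations
of order `0, …, 3` determine the weights.
-/

open Finset

section WeightedNodes

variable {ι R : Type*} [Fintype ι]

theorem eq_zero_or_eq_zero_of_sum_mul_eq_zero [Semiring R] [PartialOrder R] [IsOrderedRing R]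
    [NoZeroDivisors R] {α β : ι → R} (hα : ∀ i, 0 ≤ α i) (hβ : ∀ i, 0 ≤ β i)
    (h : ∑ i, α i * β i = 0) (i : ι) : α i = 0 ∨ β i = 0 :=
  mul_eq_zero.mp <|
    (sum_eq_zero_iff_of_nonneg fun j _ => mul_nonneg (hα j) (hβ j)).mp h i (mem_univ i)

theorem exists_eq_of_sum_mul_prod_erase_eq [CommRing R] [DecidableEq R] {α t : ι → R}
    {Z : Finset R} {z c : R} (hsupp : ∀ i, α i = 0 ∨ t i ∈ Z)
    (h : ∑ i, α i * ∏ w ∈ Z.erase z, (t i - w) = c) (hc : c ≠ 0) : ∃ i, t i = z := by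
  by_contra! hz
  refine hc (h ▸ sum_eq_zero fun i _ => ?_)
  rcases hsupp i with hα | hZ
  · rw [hα, zero_mul]
  · rw [prod_eq_zero (mem_erase.mpr ⟨hz i, hZ⟩) (sub_self _), mul_zero]

end WeightedNodes

theorem eq_of_le_of_subset_range {R : Type*} [LinearOrder R] {a b c d t₁ t₂ t₃ t₄ : R}
    (hab : a < b) (hbc : b < c) (hcd : c < d)
    (h₁ : a ≤ t₁) (h₁₂ : t₁ ≤ t₂) (h₂₃ : t₂ ≤ t₃) (h₃₄ : t₃ ≤ t₄) (h₄ : t₄ ≤ d)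
    (h : {a, b, c, d} ⊆ Set.range ![t₁, t₂, t₃, t₄]) : t₁ = a ∧ t₂ = b ∧ t₃ = c ∧ t₄ = d := by
  simp only [Set.insert_subset_iff, Set.singleton_subset_iff, Set.mem_range, Fin.exists_fin_succ,
    Fin.exists_fin_zero, Matrix.cons_val_zero, Matrix.cons_val_succ, or_false] at h
  obtain ⟨ha, hb, hc, hd⟩ := h
  obtain rfl : t₁ = a := by rcases ha with h | h | h | h <;> order
  obtain rfl : t₄ = d := by rcases hd with h | h | h | h <;> order
  rcases hb with h | h | h | h <;> rcases hc with h' | h' | h' | h' <;>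
    first | exact ⟨rfl, h, h', rfl⟩ | (exfalso; order)

noncomputable def annihilatingPoly (x : ℝ) : ℝ := (x + 1) * (1 / 2 - x) * (x * (x + 1 / 2)) ^ 2

theorem annihilatingPoly_nonneg {x : ℝ} (h₁ : -1 ≤ x) (h₂ : x ≤ 1 / 2) : 0 ≤ annihilatingPoly x :=
  mul_nonneg (mul_nonneg (by linarith) (by linarith)) (sq_nonneg _)

theorem annihilatingPoly_eq_zero_iff {x : ℝ} :
    annihilatingPoly x = 0 ↔ x ∈ ({-1, -1 / 2, 0, 1 / 2} : Finset ℝ) := by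
  simp only [annihilatingPoly, mul_eq_zero, pow_eq_zero_iff two_ne_zero, mem_insert, mem_singleton]
  grind

theorem moment_system_unique (t₁ t₂ t₃ t₄ α₁ α₂ α₃ α₄ : ℝ)
    (ht : -1 ≤ t₁ ∧ t₁ ≤ t₂ ∧ t₂ ≤ t₃ ∧ t₃ ≤ t₄ ∧ t₄ ≤ 1 / 2)
    (hα : 0 ≤ α₁ ∧ 0 ≤ α₂ ∧ 0 ≤ α₃ ∧ 0 ≤ α₄)
    (heq : ∀ k : ℕ, k ≤ 7 →
      α₁ * t₁ ^ k + α₂ * t₂ ^ k + α₃ * t₃ ^ k + α₄ * t₄ ^ k =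
        (![239, -1, 29, -1, 8, -1, 11 / 4, -1] : Fin 8 → ℝ) (Fin.ofNat 8 k)) :
    t₁ = -1 ∧ t₂ = -1 / 2 ∧ t₃ = 0 ∧ t₄ = 1 / 2 ∧
      α₁ = 1 ∧ α₂ = 56 ∧ α₃ = 126 ∧ α₄ = 56 := by
  obtain ⟨h₁, h₁₂, h₂₃, h₃₄, h₄⟩ := ht
  have m₀ := heq 0 (by norm_num); have m₁ := heq 1 (by norm_num); have m₂ := heq 2 (by norm_num)
  have m₃ := heq 3 (by norm_num); have m₄ := heq 4 (by norm_num); have m₅ := heq 5 (by norm_num)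
  have m₆ := heq 6 (by norm_num)
  norm_num [Fin.ofNat] at m₀ m₁ m₂ m₃ m₄ m₅ m₆
  set α : Fin 4 → ℝ := ![α₁, α₂, α₃, α₄]
  set t : Fin 4 → ℝ := ![t₁, t₂, t₃, t₄]
  have hsupp (i : Fin 4) : α i = 0 ∨ t i ∈ ({-1, -1 / 2, 0, 1 / 2} : Finset ℝ) := by
    refine (eq_zero_or_eq_zero_of_sum_mul_eq_zero (β := fun i => annihilatingPoly (t i))
      (fun i => ?_) (fun i => ?_) ?_ i).imp_right annihilatingPoly_eq_zero_iff.mp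
    · fin_cases i <;> simp [α, hα]
    · apply annihilatingPoly_nonneg <;> fin_cases i <;> simp [t] <;> linarith
    · simp [Fin.sum_univ_four, α, t, annihilatingPoly]
      linear_combination m₂ / 8 + 3 * m₃ / 8 - m₄ / 4 - 3 * m₅ / 2 - m₆
  have hcover : {-1, -1 / 2, 0, 1 / 2} ⊆ Set.range t := by
    -- each `c` is `w_z ∏_{w ≠ z} (z - w)` for the final weights `w = (1, 56, 126, 56)`
    rintro z (rfl | rfl | rfl | rfl)
    · refine exists_eq_of_sum_mul_prod_erase_eq hsupp (c := -3 / 4) ?_ (by norm_num)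
      simp (disch := norm_num) [Fin.sum_univ_four, α, t, erase_insert_eq_erase]
      linear_combination m₃ - m₁ / 4
    · refine exists_eq_of_sum_mul_prod_erase_eq hsupp (c := 14) ?_ (by norm_num)
      simp (disch := norm_num) [Fin.sum_univ_four, α, t, erase_insert_of_ne, erase_insert_eq_erase]
      linear_combination m₃ + m₂ / 2 - m₁ / 2
    · refine exists_eq_of_sum_mul_prod_erase_eq hsupp (c := -63 / 2) ?_ (by norm_num)
      simp (disch := norm_num) [Fin.sum_univ_four, α, t, erase_insert_of_ne, erase_insert_eq_erase]
      linear_combination m₃ + m₂ - m₁ / 4 - m₀ / 4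
    · refine exists_eq_of_sum_mul_prod_erase_eq hsupp (c := 42) ?_ (by norm_num)
      simp (disch := norm_num) [Fin.sum_univ_four, α, t, erase_insert_of_ne]
      linear_combination m₃ + 3 * m₂ / 2 + m₁ / 2
  obtain ⟨rfl, rfl, rfl, rfl⟩ :=
    eq_of_le_of_subset_range (by norm_num) (by norm_num) (by norm_num) h₁ h₁₂ h₂₃ h₃₄ h₄ hcover
  norm_num at m₀ m₁ m₂ m₃
  exact ⟨rfl, rfl, rfl, rfl, by linarith, by linarith, by linarith, by linarith⟩
end

section
/- Let t₁,…,tₙ be complex numbers such that all power sums s_k = t₁^k + ⋯ + tₙ^k are real, and suppose both Hankel matrices R = (s_{i+j-2})_{i,j=1}^n and F = (s_{i+j-1})_{i,j=1}^n are positive semidefinite. Then all tᵢ are real and nonnegative. -/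
open Finset MvPolynomial in
theorem esymm_conj (n : ℕ) (t : Fin n → ℂ)
    (hreal : ∀ k : ℕ, (∑ l, t l ^ k).im = 0) (k : ℕ) :
    (starRingEnd ℂ) (aeval t (esymm (Fin n) ℂ k)) = aeval t (esymm (Fin n) ℂ k) := by
  have hP : ∀ m : ℕ, (starRingEnd ℂ) (aeval t (psum (Fin n) ℂ m)) = aeval t (psum (Fin n) ℂ m) := by
    intro m
    have : aeval t (psum (Fin n) ℂ m) = ∑ l, t l ^ m := by
      simp [psum]
    rw [this]
    exact Complex.conj_eq_iff_im.2 (hreal m)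
  induction k using Nat.strong_induction_on with
  | _ k ih =>
    rcases Nat.eq_zero_or_pos k with hk | hk
    · subst hk; simp
    · have hid := congrArg (aeval t) (MvPolynomial.mul_esymm_eq_sum (Fin n) ℂ k)
      simp only [map_mul, map_natCast, map_pow, map_neg, map_one, map_sum] at hid
      have hconj := congrArg (starRingEnd ℂ) hid
      simp only [map_mul, map_natCast, map_pow, map_neg, map_one, map_sum] at hconj
      rw [Finset.sum_congr rfl (fun a ha => ?_)] at hconj
      · -- now hconj : k * conj (E k) = RHS, hid : k * E k = RHS
        have : (k : ℂ) * (starRingEnd ℂ) (aeval t (esymm (Fin n) ℂ k)) =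
            (k : ℂ) * aeval t (esymm (Fin n) ℂ k) := by rw [hconj, hid]
        exact mul_left_cancel₀ (Nat.cast_ne_zero.2 hk.ne') this
      · rw [ih a.1 (mem_filter.mp ha).2, hP a.2]

open Finset Polynomial in
theorem conj_closed (n : ℕ) (t : Fin n → ℂ)
    (he : ∀ k, (starRingEnd ℂ) (MvPolynomial.aeval t (MvPolynomial.esymm (Fin n) ℂ k))
        = MvPolynomial.aeval t (MvPolynomial.esymm (Fin n) ℂ k)) (j : Fin n) :
    ∃ l, t l = (starRingEnd ℂ) (t j) := by
  set p : ℂ[X] := ∏ l, (X - C (t l)) with hp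
  have hmonic : p.Monic := monic_prod_of_monic _ _ fun l _ => monic_X_sub_C _
  have hdeg : p.natDegree = n := by
    rw [hp, natDegree_prod_of_monic _ _ fun l _ => monic_X_sub_C _]
    simp
  have hmap : p.map (starRingEnd ℂ) = p := by
    ext k
    rw [coeff_map]
    rcases le_or_gt k n with hkn | hkn
    · have hcard : (Multiset.card (Finset.univ.val.map t)) = n := by simp
      have hcoeff : p.coeff k = (-1) ^ (n - k) *
          (Finset.univ.val.map t).esymm (n - k) := by
        rw [hp, Finset.prod_eq_multiset_prod]
        have : Finset.univ.val.map (fun l => X - C (t l)) =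
            (Finset.univ.val.map t).map (fun r => X - C r) := by
          rw [Multiset.map_map]; rfl
        rw [this, Multiset.prod_X_sub_C_coeff _ (by rw [hcard]; exact hkn), hcard]
      rw [hcoeff]
      have hE := he (n - k)
      rw [MvPolynomial.aeval_esymm_eq_multiset_esymm] at hE
      simp only [map_mul, map_pow, map_neg, map_one]
      rw [hE]
    · rw [coeff_eq_zero_of_natDegree_lt (by rw [hdeg]; exact hkn), map_zero]
  have hzero : p.eval (t j) = 0 := by
    rw [hp, eval_prod]
    exact Finset.prod_eq_zero (mem_univ j) (by simp)
  have hzero' : p.eval ((starRingEnd ℂ) (t j)) = 0 := by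
    have : p.eval ((starRingEnd ℂ) (t j)) = (starRingEnd ℂ) (p.eval (t j)) := by
      conv_lhs => rw [← hmap]
      rw [Polynomial.eval_map, ← Polynomial.eval₂_at_apply]
    rw [this, hzero, map_zero]
  rw [hp, eval_prod] at hzero'
  obtain ⟨l, -, hl⟩ := Finset.prod_eq_zero_iff.mp hzero'
  refine ⟨l, ?_⟩
  simp only [eval_sub, eval_X, eval_C] at hl
  exact (sub_eq_zero.mp hl).symm

open Finset Polynomial in
theorem interp_real (n : ℕ) (S : Finset ℂ) (hcard : S.card ≤ n)
    (hconjS : ∀ z ∈ S, (starRingEnd ℂ) z ∈ S)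
    (v : ℂ → ℂ) (hv : ∀ z, v ((starRingEnd ℂ) z) = (starRingEnd ℂ) (v z)) :
    ∃ x : Fin n → ℝ, ∀ z ∈ S, (∑ i : Fin n, (x i : ℂ) * z ^ (i : ℕ)) = v z := by
  rcases Nat.eq_zero_or_pos n with hn | hn
  · subst hn
    refine ⟨fun i => 0, fun z hz => absurd hz ?_⟩
    have : S = ∅ := Finset.card_eq_zero.mp (Nat.le_zero.mp hcard)
    simp [this]
  have hinj : Set.InjOn (id : ℂ → ℂ) S := Function.injective_id.injOn
  set q : ℂ[X] := Lagrange.interpolate S id v with hqdef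
  set q' : ℂ[X] := Polynomial.C (2⁻¹ : ℂ) * (q + q.map (starRingEnd ℂ)) with hq'def
  have hmapdeg : (q.map (starRingEnd ℂ)).degree = q.degree := Polynomial.degree_map _ _
  have hdeg : q'.degree < (n : WithBot ℕ) := by
    calc q'.degree ≤ (Polynomial.C (2⁻¹ : ℂ)).degree + (q + q.map (starRingEnd ℂ)).degree :=
          Polynomial.degree_mul_le _ _
    _ ≤ 0 + (q + q.map (starRingEnd ℂ)).degree := by
          gcongr; exact Polynomial.degree_C_le
    _ = (q + q.map (starRingEnd ℂ)).degree := by rw [zero_add]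
    _ ≤ max q.degree (q.map (starRingEnd ℂ)).degree := Polynomial.degree_add_le _ _
    _ = q.degree := by rw [hmapdeg, max_self]
    _ < (S.card : WithBot ℕ) := Lagrange.degree_interpolate_lt _ hinj
    _ ≤ (n : WithBot ℕ) := by exact_mod_cast hcard
  have hndeg : q'.natDegree < n := by
    by_cases h0 : q' = 0
    · rw [h0]; simpa using hn
    · exact (Polynomial.natDegree_lt_iff_degree_lt h0).mpr hdeg
  have hmapev : ∀ z : ℂ, (q.map (starRingEnd ℂ)).eval z = (starRingEnd ℂ) (q.eval ((starRingEnd ℂ) z)) := by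
    intro z
    rw [Polynomial.eval_map, ← Polynomial.eval₂_at_apply]
    simp
  have hev : ∀ z ∈ S, q'.eval z = v z := by
    intro z hz
    rw [hq'def]
    simp only [eval_mul, eval_C, eval_add]
    rw [hmapev, hqdef]
    have h1 := Lagrange.eval_interpolate_at_node (r := v) hinj hz
    have h2 := Lagrange.eval_interpolate_at_node (r := v) hinj (hconjS z hz)
    simp only [id_eq] at h1 h2
    rw [h1, h2, hv, Complex.conj_conj]
    ring
  have hcoeff : ∀ k, ((q'.coeff k : ℂ).re : ℂ) = q'.coeff k := by
    intro k
    have : (starRingEnd ℂ) (q'.coeff k) = q'.coeff k := by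
      rw [hq'def]
      simp only [Polynomial.coeff_C_mul, Polynomial.coeff_add, Polynomial.coeff_map]
      rw [map_mul, map_add, Complex.conj_conj]
      rw [show (starRingEnd ℂ) (2⁻¹ : ℂ) = (2⁻¹ : ℂ) by rw [map_inv₀, map_ofNat]]
      ring
    exact Complex.conj_eq_iff_re.mp this
  refine ⟨fun i => (q'.coeff i).re, fun z hz => ?_⟩
  rw [← hev z hz, Polynomial.eval_eq_sum_range' (lt_of_lt_of_le hndeg (le_refl n))]
  rw [Fin.sum_univ_eq_sum_range (fun i => ((q'.coeff i).re : ℂ) * z ^ i)]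
  exact Finset.sum_congr rfl fun i _ => by rw [hcoeff]

open Finset in
theorem quad_form (n : ℕ) (t : Fin n → ℂ) (c : ℕ) (x : Fin n → ℝ) :
    ∑ i : Fin n, x i * ∑ j : Fin n, (∑ l, t l ^ ((i:ℕ) + (j:ℕ) + c)).re * x j
      = ∑ l, ((t l ^ c) * (∑ i, (x i : ℂ) * t l ^ (i:ℕ))^2).re := by
  have key : ∀ l, (t l ^ c) * (∑ i, (x i:ℂ) * t l ^ (i:ℕ))^2
      = ∑ i, ∑ j, ((x i * x j : ℝ) : ℂ) * t l ^ ((i:ℕ)+(j:ℕ)+c) := by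
    intro l
    rw [sq, Finset.sum_mul_sum, Finset.mul_sum]
    refine Finset.sum_congr rfl fun i _ => ?_
    rw [Finset.mul_sum]
    refine Finset.sum_congr rfl fun j _ => ?_
    rw [pow_add, pow_add]
    push_cast
    ring
  simp_rw [key, Complex.re_sum, Complex.re_ofReal_mul]
  rw [Finset.sum_comm]
  refine Finset.sum_congr rfl fun i _ => ?_
  rw [Finset.mul_sum, Finset.sum_comm]
  refine Finset.sum_congr rfl fun j _ => ?_
  rw [Finset.sum_mul, Finset.mul_sum]
  refine Finset.sum_congr rfl fun l _ => ?_
  ring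


open Finset Matrix in
theorem sylvester_real_nonneg (n : ℕ) (t : Fin n → ℂ)
    (hreal : ∀ k : ℕ, (∑ l, t l ^ k).im = 0)
    (hR : (Matrix.of fun i j : Fin n => (∑ l, t l ^ ((i : ℕ) + (j : ℕ))).re).PosSemidef)
    (hF : (Matrix.of fun i j : Fin n => (∑ l, t l ^ ((i : ℕ) + (j : ℕ) + 1)).re).PosSemidef) :
    ∀ i, (t i).im = 0 ∧ 0 ≤ (t i).re := by
  classical
  have hclosed : ∀ j, ∃ l, t l = (starRingEnd ℂ) (t j) :=
    conj_closed n t (esymm_conj n t hreal)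
  set S : Finset ℂ := Finset.image t Finset.univ with hS
  have hcard : S.card ≤ n := le_trans Finset.card_image_le (by simp)
  have hSconj : ∀ z ∈ S, (starRingEnd ℂ) z ∈ S := by
    intro z hz
    obtain ⟨a, -, rfl⟩ := Finset.mem_image.mp hz
    obtain ⟨l, hl⟩ := hclosed a
    exact Finset.mem_image.mpr ⟨l, Finset.mem_univ l, hl⟩
  have htS : ∀ l, t l ∈ S := fun l => Finset.mem_image.mpr ⟨l, Finset.mem_univ l, rfl⟩
  -- Part 1: all t i are real
  have him : ∀ i, (t i).im = 0 := by
    by_contra hcon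
    push_neg at hcon
    obtain ⟨j, hj⟩ := hcon
    have hne : (starRingEnd ℂ) (t j) ≠ t j := fun h => hj (Complex.conj_eq_iff_im.mp h)
    set v : ℂ → ℂ := fun z =>
      if z = t j then Complex.I else if z = (starRingEnd ℂ) (t j) then -Complex.I else 0 with hv
    have hveq : ∀ z, v ((starRingEnd ℂ) z) = (starRingEnd ℂ) (v z) := by
      intro z
      by_cases h1 : z = t j
      · subst h1
        simp [hv, hne]
      · by_cases h2 : z = (starRingEnd ℂ) (t j)
        · subst h2
          simp [hv, hne, h1]
        · have h3 : (starRingEnd ℂ) z ≠ t j := by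
            intro h
            exact h2 (by rw [← h, Complex.conj_conj])
          have h4 : (starRingEnd ℂ) z ≠ (starRingEnd ℂ) (t j) := by
            intro h
            exact h1 ((starRingEnd ℂ).injective h)
          rw [hv]
          simp only [if_neg h1, if_neg h2, if_neg h3, if_neg h4, map_zero]
    obtain ⟨x, hx⟩ := interp_real n S hcard hSconj v hveq
    have hpsd := hR.dotProduct_mulVec_nonneg x
    have hexp : dotProduct (star x)
        ((Matrix.of fun i j : Fin n => (∑ l, t l ^ ((i : ℕ) + (j : ℕ))).re) *ᵥ x)
        = ∑ i : Fin n, x i * ∑ j : Fin n, (∑ l, t l ^ ((i:ℕ) + (j:ℕ) + 0)).re * x j := by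
      simp [dotProduct, Matrix.mulVec, Matrix.of_apply]
    rw [hexp, quad_form n t 0 x] at hpsd
    have hval : ∀ l, (t l ^ 0 * (∑ i : Fin n, ((x i : ℂ) * t l ^ (i:ℕ)))^2).re
        = if t l = t j then -1 else if t l = (starRingEnd ℂ) (t j) then -1 else 0 := by
      intro l
      rw [pow_zero, one_mul, hx (t l) (htS l), hv]
      by_cases h1 : t l = t j
      · simp [h1, Complex.I_sq]
      · by_cases h2 : t l = (starRingEnd ℂ) (t j)
        · simp [h1, h2, Complex.I_sq]
        · simp [h1, h2]
    have hle : (∑ l, (t l ^ 0 * (∑ i : Fin n, ((x i : ℂ) * t l ^ (i:ℕ)))^2).re)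
        ≤ ∑ l : Fin n, (if l = j then (-1 : ℝ) else 0) := by
      refine Finset.sum_le_sum fun l _ => ?_
      rw [hval l]
      by_cases h : l = j
      · subst h; simp
      · split_ifs <;> norm_num
    rw [Finset.sum_ite_eq' Finset.univ j (fun _ => (-1 : ℝ))] at hle
    simp only [Finset.mem_univ, if_pos] at hle
    linarith
  refine fun j => ⟨him j, ?_⟩
  by_contra hcon
  push_neg at hcon
  -- Part 2: nonnegativity
  set v : ℂ → ℂ := fun z => if z = t j then 1 else 0 with hv
  have hconjfix : ∀ l, (starRingEnd ℂ) (t l) = t l := fun l => Complex.conj_eq_iff_im.mpr (him l)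
  have hveq : ∀ z, v ((starRingEnd ℂ) z) = (starRingEnd ℂ) (v z) := by
    intro z
    by_cases h1 : z = t j
    · subst h1
      rw [hconjfix j, hv]
      simp
    · have h2 : (starRingEnd ℂ) z ≠ t j := by
        intro h
        apply h1
        rw [← Complex.conj_conj z, h, hconjfix j]
      rw [hv]
      simp [h1, h2]
  obtain ⟨x, hx⟩ := interp_real n S hcard hSconj v hveq
  have hpsd := hF.dotProduct_mulVec_nonneg x
  have hexp : dotProduct (star x)
      ((Matrix.of fun i j : Fin n => (∑ l, t l ^ ((i : ℕ) + (j : ℕ) + 1)).re) *ᵥ x)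
      = ∑ i : Fin n, x i * ∑ j : Fin n, (∑ l, t l ^ ((i:ℕ) + (j:ℕ) + 1)).re * x j := by
    simp [dotProduct, Matrix.mulVec, Matrix.of_apply]
  rw [hexp, quad_form n t 1 x] at hpsd
  have hval : ∀ l, (t l ^ 1 * (∑ i : Fin n, ((x i : ℂ) * t l ^ (i:ℕ)))^2).re
      = if t l = t j then (t j).re else 0 := by
    intro l
    rw [pow_one, hx (t l) (htS l), hv]
    by_cases h1 : t l = t j
    · simp [h1]
    · simp [h1]
  have hle : (∑ l, (t l ^ 1 * (∑ i : Fin n, ((x i : ℂ) * t l ^ (i:ℕ)))^2).re)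
      ≤ ∑ l : Fin n, (if l = j then (t j).re else 0) := by
    refine Finset.sum_le_sum fun l _ => ?_
    rw [hval l]
    by_cases h : l = j
    · subst h; simp
    · rw [if_neg h]
      split_ifs with h'
      · linarith
      · exact le_refl 0
  rw [Finset.sum_ite_eq' Finset.univ j (fun _ => (t j).re)] at hle
  simp only [Finset.mem_univ, if_pos] at hle
  linarith
end

section
/- Let C be a finite set of points on the unit sphere S^{n−1} with pairwise inner products at most cos θ for distinct points (a spherical θ-code), where 0 < θ < π/2. Then Σ_{(u,v): ⟨u,v⟩ < −√(cos θ)} ⟨u,v⟩² ≤ cos θ · #{(u,v) : ⟨u,v⟩ < −√(cos θ)} + |C|·(1 − cos θ), where sums and counts are over ordered pairs of distinct points of C. -/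
/-!
Fix u ∈ C and let F be the points v with ⟨u,v⟩ < -√(cos θ); put a_v = -⟨u,v⟩ ≥ 0,
T = Σ a_v² and w = Σ a_v v. Since the a_v are nonnegative and the points are pairwise at
inner product ≤ c = cos θ, ‖w‖² ≤ c (Σ a_v)² + (1 - c) T ≤ c |F| T + (1 - c) T.
On the other hand T = -⟨u,w⟩ ≤ ‖w‖, so T ≤ c |F| + 1 - c. Summing over u gives the claim.
-/

open Finset RealInnerProductSpace

variable {E ι : Type*} [NormedAddCommGroup E] [InnerProductSpace ℝ E]

theorem norm_sq_sum_smul_le_of_inner_le {c : ℝ} (s : Finset ι) (v : ι → E)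
    (a : ι → ℝ) (hunit : ∀ i ∈ s, ‖v i‖ = 1)
    (hcode : ∀ i ∈ s, ∀ j ∈ s, i ≠ j → ⟪v i, v j⟫ ≤ c) (ha : ∀ i ∈ s, 0 ≤ a i) :
    ‖∑ i ∈ s, a i • v i‖ ^ 2 ≤ c * (∑ i ∈ s, a i) ^ 2 + (1 - c) * ∑ i ∈ s, a i ^ 2 := by
  classical
  have hterm : ∀ i ∈ s, ∀ j ∈ s, a i * a j * ⟪v i, v j⟫ ≤
      c * (a i * a j) + if i = j then (1 - c) * a i ^ 2 else 0 := by
    intro i hi j hj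
    obtain rfl | hij := eq_or_ne i j
    · rw [real_inner_self_eq_norm_sq, hunit i hi, if_pos rfl]
      linarith
    · rw [if_neg hij, add_zero, mul_comm c]
      exact mul_le_mul_of_nonneg_left (hcode i hi j hj hij) (mul_nonneg (ha i hi) (ha j hj))
  calc ‖∑ i ∈ s, a i • v i‖ ^ 2 = ∑ i ∈ s, ∑ j ∈ s, a i * a j * ⟪v i, v j⟫ := by
        simp only [← real_inner_self_eq_norm_sq, sum_inner, inner_sum, real_inner_smul_left,
          real_inner_smul_right]
        exact sum_congr rfl fun i _ => sum_congr rfl fun j _ => by rw [real_inner_comm]; ring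
    _ ≤ ∑ i ∈ s, ∑ j ∈ s, (c * (a i * a j) + if i = j then (1 - c) * a i ^ 2 else 0) :=
        sum_le_sum fun i hi => sum_le_sum fun j hj => hterm i hi j hj
    _ = c * (∑ i ∈ s, a i) ^ 2 + (1 - c) * ∑ i ∈ s, a i ^ 2 := by
        simp only [sum_add_distrib, sum_ite_eq, sum_ite_mem, inter_self, ← mul_sum, sq,
          sum_mul_sum]

theorem sum_inner_sq_le_of_inner_nonpos {c : ℝ} (hc0 : 0 ≤ c) (hc1 : c ≤ 1)
    {u : E} (hu : ‖u‖ = 1) (s : Finset ι) (v : ι → E) (hunit : ∀ i ∈ s, ‖v i‖ = 1)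
    (hcode : ∀ i ∈ s, ∀ j ∈ s, i ≠ j → ⟪v i, v j⟫ ≤ c) (hobtuse : ∀ i ∈ s, ⟪u, v i⟫ ≤ 0) :
    ∑ i ∈ s, ⟪u, v i⟫ ^ 2 ≤ c * #s + (1 - c) := by
  set T := ∑ i ∈ s, ⟪u, v i⟫ ^ 2
  set w := ∑ i ∈ s, (-⟪u, v i⟫) • v i
  have hT : T ≤ ‖w‖ := by
    have huw : ⟪u, w⟫ = -T := by
      simp only [w, T, inner_sum, real_inner_smul_right, sq, neg_mul, sum_neg_distrib]
    calc T ≤ |⟪u, w⟫| := by rw [huw, abs_neg]; exact le_abs_self T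
      _ ≤ ‖u‖ * ‖w‖ := abs_real_inner_le_norm u w
      _ = ‖w‖ := by rw [hu, one_mul]
  have hw : ‖w‖ ^ 2 ≤ c * #s * T + (1 - c) * T := by
    have hgram := norm_sq_sum_smul_le_of_inner_le s v (fun i => -⟪u, v i⟫) hunit hcode
      fun i hi => neg_nonneg.2 (hobtuse i hi)
    have hcs := sq_sum_le_card_mul_sum_sq (s := s) (f := fun i => -⟪u, v i⟫)
    simp only [neg_sq] at hgram hcs
    nlinarith [mul_le_mul_of_nonneg_left hcs hc0]
  have hT0 : 0 ≤ T := sum_nonneg fun i _ => sq_nonneg _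
  rcases hT0.eq_or_lt with h0 | hpos
  · rw [← h0]; positivity
  · nlinarith

open scoped Classical in
theorem pfender_inequality (n : ℕ) (θ : ℝ) (hθ : 0 < θ ∧ θ < Real.pi / 2)
    (C : Finset (EuclideanSpace ℝ (Fin n)))
    (hunit : ∀ x ∈ C, ‖x‖ = 1)
    (hcode : ∀ u ∈ C, ∀ v ∈ C, u ≠ v → (inner ℝ u v : ℝ) ≤ Real.cos θ) :
    (∑ u ∈ C, ∑ v ∈ C.erase u,
        if (inner ℝ u v : ℝ) < -Real.sqrt (Real.cos θ) then (inner ℝ u v : ℝ) ^ 2 else 0) ≤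
      Real.cos θ *
          (∑ u ∈ C, ∑ v ∈ C.erase u,
            if (inner ℝ u v : ℝ) < -Real.sqrt (Real.cos θ) then (1 : ℝ) else 0) +
        (C.card : ℝ) * (1 - Real.cos θ) := by
  set c := Real.cos θ
  have hc0 : 0 ≤ c := Real.cos_nonneg_of_mem_Icc ⟨by linarith [Real.pi_pos], hθ.2.le⟩
  have hrow : ∀ u ∈ C, (∑ v ∈ C.erase u, if ⟪u, v⟫ < -√c then ⟪u, v⟫ ^ 2 else 0) ≤
      c * (∑ v ∈ C.erase u, if ⟪u, v⟫ < -√c then (1 : ℝ) else 0) + (1 - c) := by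
    intro u hu
    rw [← sum_filter, sum_boole]
    have hsub : (C.erase u).filter (fun v => ⟪u, v⟫ < -√c) ⊆ C.erase u := filter_subset _ _
    exact sum_inner_sq_le_of_inner_nonpos hc0 (Real.cos_le_one θ) (hunit u hu) _ id
      (fun v hv => hunit v (mem_of_mem_erase (hsub hv)))
      (fun v hv w hw => hcode v (mem_of_mem_erase (hsub hv)) w (mem_of_mem_erase (hsub hw)))
      fun v hv => ((mem_filter.1 hv).2.trans_le (neg_nonpos.2 (Real.sqrt_nonneg c))).le
  calc _ ≤ ∑ u ∈ C, (c * (∑ v ∈ C.erase u, if ⟪u, v⟫ < -√c then (1 : ℝ) else 0) + (1 - c)) :=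
        sum_le_sum hrow
    _ = _ := by rw [sum_add_distrib, mul_sum, sum_const, nsmul_eq_mul]
end
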